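/- Let n ≥ 3 and let Dj_n = (C_n □ P_2) + K_1 be the djembe graph obtained by joining the corresponding vertices of two disjoint cycles of order n and joining all vertices of both cycles to one external vertex. Then the chromatic curling number of Dj_n equals n if n is even and n−1 if n is odd. -/

import Mathlib

open SimpleGraph Finset

/-- A proper vertex colouring of `G` with colour set `Fin k`. -/
def IsProperColoring {V : Type*} (G : SimpleGraph V) {k : ℕ} (C : V → Fin k) : Prop :=
  ∀ ⦃v w⦄, G.Adj v w → C v ≠ C w

/-- The chromatic number of `G`, as a natural number. -/
noncomputable def chi {V : Type*} (G : SimpleGraph V) : ℕ :=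
  G.chromaticNumber.toNat

/-- θ(cᵢ): the number of vertices receiving colour `i` under the colouring `C`. -/
def theta {V : Type*} [Fintype V] {k : ℕ} (C : V → Fin k) (i : Fin k) : ℕ :=
  (Finset.univ.filter fun v => C v = i).card

/-- The list of colour class sizes of `C`, sorted in descending order. -/
def classSizesDesc {V : Type*} [Fintype V] {k : ℕ} (C : V → Fin k) : List ℕ :=
  (List.insertionSort (· ≤ ·) (List.ofFn fun i => theta C i)).reverse

/-- A χ⁻-colouring of `G`: a proper colouring with exactly χ(G) colours such that,
greedily, the colour class of `c₁` is as large as possible, then the colour class of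
`c₂` is as large as possible among the remaining vertices, and so on; equivalently,
the descending sequence of colour class sizes is lexicographically maximal among
all proper colourings with χ(G) colours. -/
def IsChiMinusColoring {V : Type*} [Fintype V] (G : SimpleGraph V)
    (C : V → Fin (chi G)) : Prop :=
  IsProperColoring G C ∧
    ∀ C' : V → Fin (chi G), IsProperColoring G C' →
      ¬ List.Lex (· < ·) (classSizesDesc C) (classSizesDesc C')

/-- The djembe graph `Djₙ = (Cₙ □ P₂) + K₁`: two disjoint cycles of order `n`
(the vertices `some (v, false)` and `some (v, true)`), with corresponding vertices
joined, and every cycle vertex joined to an external central vertex `none`. -/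
def djembeG (n : ℕ) : SimpleGraph (Option (Fin n × Bool)) :=
  SimpleGraph.fromRel (fun a b =>
    match a, b with
    | some (v, i), some (w, j) => (i = j ∧ w.val = (v.val + 1) % n) ∨ (i ≠ j ∧ w = v)
    | none, some _ => True
    | _, _ => False)

lemma classSizesDesc_head {V : Type*} [Fintype V] {k : ℕ} (hk : 0 < k) (C : V → Fin k) :
    ∃ a t, classSizesDesc C = a :: t ∧ (∀ i, theta C i ≤ a) ∧ ∃ i, theta C i = a := by
  set l := List.ofFn fun i => theta C i with hl
  set s := List.insertionSort (· ≤ ·) l with hs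
  have hperm : s.Perm l := List.perm_insertionSort _ _
  have hlen : s.length = k := by
    rw [hperm.length_eq, hl, List.length_ofFn]
  have hne : s.reverse ≠ [] := by
    intro h
    rw [List.reverse_eq_nil_iff] at h
    rw [h] at hlen
    simp at hlen
    omega
  obtain ⟨a, t, hat⟩ := List.exists_cons_of_ne_nil hne
  have hsorted : List.Pairwise (· ≥ ·) s.reverse := by
    rw [List.pairwise_reverse]
    exact List.Pairwise.imp (fun h => h) (List.pairwise_insertionSort (· ≤ ·) l)
  have hmem : ∀ x ∈ l, x ≤ a := by
    intro x hx
    have : x ∈ s.reverse := by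
      rw [List.mem_reverse]; exact hperm.mem_iff.2 hx
    rw [hat] at this
    rcases List.mem_cons.1 this with h | h
    · omega
    · exact List.rel_of_pairwise_cons (R := (· ≥ ·)) (hat ▸ hsorted) h
  have hamem : a ∈ l := by
    have : a ∈ s.reverse := hat ▸ (List.mem_cons_self : a ∈ a :: t)
    rw [List.mem_reverse] at this; exact hperm.mem_iff.1 this
  rw [hl, List.mem_ofFn] at hamem
  obtain ⟨i, hi⟩ := hamem
  refine ⟨a, t, hat, fun i' => ?_, ⟨i, hi⟩⟩
  exact hmem _ (by rw [hl, List.mem_ofFn]; exact ⟨i', rfl⟩)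


lemma dj_adj_none {n : ℕ} (p : Fin n × Bool) : (djembeG n).Adj none (some p) := by
  rw [djembeG, SimpleGraph.fromRel_adj]
  exact ⟨by simp, Or.inl trivial⟩

lemma dj_adj_cross {n : ℕ} (v : Fin n) (b : Bool) :
    (djembeG n).Adj (some (v, b)) (some (v, !b)) := by
  rw [djembeG, SimpleGraph.fromRel_adj]
  refine ⟨by simp, Or.inl (Or.inr ⟨by simp, rfl⟩)⟩

lemma dj_adj_cycle {n : ℕ} (hn : 2 ≤ n) (v w : Fin n) (b : Bool)
    (h : w.val = (v.val + 1) % n) : (djembeG n).Adj (some (v, b)) (some (w, b)) := by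
  rw [djembeG, SimpleGraph.fromRel_adj]
  have hvw : v ≠ w := by
    intro he
    subst he
    rcases Nat.lt_or_ge (v.val + 1) n with h1 | h1
    · rw [Nat.mod_eq_of_lt h1] at h; omega
    · have hv : v.val < n := v.isLt
      have : v.val + 1 = n := by omega
      rw [this, Nat.mod_self] at h; omega
  exact ⟨by simp [hvw], Or.inl (Or.inl ⟨rfl, h⟩)⟩

lemma theta_ub {n k : ℕ} (hn : 3 ≤ n) (C : Option (Fin n × Bool) → Fin k)
    (hC : IsProperColoring (djembeG n) C) (i : Fin k) :
    theta C i ≤ n ∧ (¬ Even n → theta C i ≤ n - 1) := by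
  classical
  set S := Finset.univ.filter (fun v => C v = i) with hS
  have hmemS : ∀ x, x ∈ S ↔ C x = i := by
    intro x; simp [hS]
  by_cases hnone : (none : Option (Fin n × Bool)) ∈ S
  · -- class is {none}
    have hsub : S ⊆ {none} := by
      intro x hx
      rcases x with _ | p
      · simp
      · exact absurd (((hmemS none).1 hnone).trans ((hmemS _).1 hx).symm)
          (hC (dj_adj_none p))
    have h1 : S.card ≤ 1 := le_trans (Finset.card_le_card hsub) (by simp)
    constructor
    · exact le_trans h1 (by omega)
    · intro _; exact le_trans h1 (by omega)
  · -- class avoids none; at most one of (v,b) per v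
    have hcross : ∀ (v : Fin n) (b : Bool), some (v, b) ∈ S → some (v, !b) ∉ S := by
      intro v b hb hnb
      exact hC (dj_adj_cross v b) (((hmemS _).1 hb).trans ((hmemS _).1 hnb).symm)
    have h0 : (0 : ℕ) < n := by omega
    set g : Option (Fin n × Bool) → Fin n := fun x => (x.getD (⟨0, h0⟩, false)).1 with hg
    have hinj : Set.InjOn g S := by
      intro x hx y hy hxy
      rcases x with _ | ⟨v, b⟩
      · exact absurd hx hnone
      rcases y with _ | ⟨w, c⟩
      · exact absurd hy hnone
      simp only [hg, Option.getD_some] at hxy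
      cases hxy
      by_cases hbc : b = c
      · rw [hbc]
      · have : c = !b := by cases b <;> cases c <;> simp_all
        rw [this] at hy
        exact absurd hy (hcross v b hx)
    constructor
    · have := Finset.card_le_card_of_injOn g (fun a _ => Finset.mem_univ (g a)) hinj
      exact (show S.card ≤ n by simpa using this)
    · intro hodd
      -- find an uncovered v
      by_cases hcov : ∀ v : Fin n, ∃ b, some (v, b) ∈ S
      · exfalso
        choose f hf using hcov
        have key : ∀ v w : Fin n, w.val = (v.val + 1) % n → f w ≠ f v := by
          intro v w hw heq
          have h1 : C (some (v, f v)) = i := (hmemS _).1 (hf v)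
          have h2 : C (some (w, f v)) = i := by rw [← heq]; exact (hmemS _).1 (hf w)
          exact hC (dj_adj_cycle (by omega) v w (f v) hw) (h1.trans h2.symm)
        have halt : ∀ v w : Fin n, w.val = (v.val + 1) % n → f w = !(f v) := by
          intro v w hw
          have := key v w hw
          cases hb : (f v) <;> cases hb2 : (f w) <;> simp_all
        set q : ℕ → Bool := fun j => f ⟨j % n, Nat.mod_lt _ h0⟩ with hq
        have hstep : ∀ j, q (j + 1) = !(q j) := by
          intro j
          apply halt
          show (j + 1) % n = (j % n + 1) % n
          conv_lhs => rw [Nat.add_mod]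
          rw [Nat.mod_eq_of_lt (show 1 < n by omega)]
        have hpar : ∀ j, q j = if Even j then q 0 else !(q 0) := by
          intro j
          induction j with
          | zero => simp
          | succ m ih =>
            rw [hstep, ih]
            by_cases h : Even m
            · rw [if_pos h, if_neg (by simp [Nat.even_add_one, h])]
            · rw [if_neg h, if_pos (by simp [Nat.even_add_one, h]), Bool.not_not]
        have h1 : q n = q 0 := by
          simp only [hq]
          congr 1
          apply Fin.ext
          simp [Nat.mod_self]
        have h2 : q n = !(q 0) := by
          rw [hpar n, if_neg hodd]
        rw [h1] at h2
        exact (Bool.not_ne_self (q 0)).symm h2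
      · push_neg at hcov
        obtain ⟨v, hv⟩ := hcov
        have hmap : ∀ a ∈ S, g a ∈ Finset.univ.erase v := by
          intro a ha
          rcases a with _ | ⟨w, c⟩
          · exact absurd ha hnone
          · simp only [Finset.mem_erase, Finset.mem_univ, and_true, hg, Option.getD_some]
            intro hwv
            exact hv c (by rwa [hwv] at ha)
        have := Finset.card_le_card_of_injOn g hmap hinj
        exact (show S.card ≤ n - 1 by simpa using this)


lemma chi_ge3 {n k : ℕ} (hn : 3 ≤ n) (C : Option (Fin n × Bool) → Fin k)
    (hC : IsProperColoring (djembeG n) C) : 3 ≤ k := by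
  classical
  have h0 : 0 < n := by omega
  set v0 : Fin n := ⟨0, h0⟩
  set a := C none
  set b := C (some (v0, false))
  set c := C (some (v0, true))
  have hab : a ≠ b := hC (dj_adj_none _)
  have hac : a ≠ c := hC (dj_adj_none _)
  have hbc : b ≠ c := hC (dj_adj_cross v0 false)
  have hcard : ({a, b, c} : Finset (Fin k)).card = 3 := by
    rw [Finset.card_insert_of_notMem (by simp [hab, hac]),
      Finset.card_insert_of_notMem (by simp [hbc]), Finset.card_singleton]
  calc 3 = ({a, b, c} : Finset (Fin k)).card := hcard.symm
    _ ≤ Finset.univ.card := Finset.card_le_univ _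
    _ = k := by simp

lemma fin3_alt : ∀ x a z zw : Fin 3, a ≠ x → z ≠ x → zw ≠ x → zw ≠ z →
    (zw = a ↔ ¬ z = a) := by decide

lemma chi_ge4 {n k : ℕ} (hn : 3 ≤ n) (hodd : ¬ Even n)
    (C : Option (Fin n × Bool) → Fin k)
    (hC : IsProperColoring (djembeG n) C) : 4 ≤ k := by
  classical
  by_contra hk4
  have hk : k ≤ 3 := by omega
  set c : Option (Fin n × Bool) → Fin 3 := fun x => Fin.castLE hk (C x) with hc
  have hcprop : ∀ ⦃v w⦄, (djembeG n).Adj v w → c v ≠ c w := by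
    intro v w h he
    exact hC h (Fin.castLE_inj.1 he)
  have h0 : 0 < n := by omega
  set x := c none with hx
  have hnx : ∀ p : Fin n × Bool, c (some p) ≠ x := fun p he =>
    (hcprop (dj_adj_none p)) he.symm
  set a := c (some (⟨0, h0⟩, false)) with ha
  have hax : a ≠ x := hnx _
  set q : ℕ → Prop := fun j => c (some (⟨j % n, Nat.mod_lt _ h0⟩, false)) = a with hq
  have hq0 : q 0 := by
    simp only [hq]
    congr 2
  have hstep : ∀ j, q (j + 1) ↔ ¬ q j := by
    intro j
    have hadj : ((j + 1) % n) = ((j % n) + 1) % n := by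
      conv_lhs => rw [Nat.add_mod]
      rw [Nat.mod_eq_of_lt (show 1 < n by omega)]
    have hne := hcprop (dj_adj_cycle (by omega) ⟨j % n, Nat.mod_lt _ h0⟩
      ⟨(j + 1) % n, Nat.mod_lt _ h0⟩ false hadj)
    exact fin3_alt x a _ _ hax (hnx _) (hnx _) (Ne.symm hne)
  have hpar : ∀ j, q j ↔ Even j := by
    intro j
    induction j with
    | zero => simpa using hq0
    | succ m ih =>
      rw [hstep, ih, Nat.even_add_one]
  have h1 : q n := by
    simp only [hq]
    have : (⟨n % n, Nat.mod_lt _ h0⟩ : Fin n) = ⟨0 % n, Nat.mod_lt _ h0⟩ := by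
      apply Fin.ext; simp [Nat.mod_self]
    rw [this]
    exact hq0
  exact hodd ((hpar n).1 h1)


lemma even_coloring {n : ℕ} (hn : 3 ≤ n) (hev : Even n) {k : ℕ} (hk : 3 ≤ k) :
    ∃ C' : Option (Fin n × Bool) → Fin k,
      IsProperColoring (djembeG n) C' ∧ ∃ i, n ≤ theta C' i := by
  classical
  set cE : Option (Fin n × Bool) → Fin 3 := fun x =>
    match x with
    | none => ⟨2, by omega⟩
    | some (v, b) => ⟨(v.val + b.toNat) % 2, by omega⟩ with hcE
  set C' : Option (Fin n × Bool) → Fin k := fun x => Fin.castLE hk (cE x) with hC'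
  have h2n : 2 ∣ n := hev.two_dvd
  have key : ∀ x y, (match x, y with
      | some (v, i), some (w, j) => (i = j ∧ w.val = (v.val + 1) % n) ∨ (i ≠ j ∧ w = v)
      | none, some _ => True
      | _, _ => False) → cE x ≠ cE y := by
    intro x y h
    rcases x with _ | ⟨v, i⟩ <;> rcases y with _ | ⟨w, j⟩
    · exact absurd h (by simp)
    · -- none, some
      simp only [hcE]
      intro he
      have := congrArg Fin.val he
      simp only at this
      omega
    · exact absurd h (by simp)
    · -- some, some
      simp only at h
      rcases h with ⟨hij, hw⟩ | ⟨hij, hw⟩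
      · subst hij
        have hmm : w.val % 2 = (v.val + 1) % 2 := by
          rw [hw, Nat.mod_mod_of_dvd _ h2n]
        simp only [hcE]
        intro he
        have := congrArg Fin.val he
        simp only at this
        omega
      · subst hw
        simp only [hcE]
        intro he
        have h2 := congrArg Fin.val he
        simp only at h2
        cases i <;> cases j <;> simp_all <;> omega
  have hprop : IsProperColoring (djembeG n) C' := by
    intro x y hadj
    rw [djembeG, SimpleGraph.fromRel_adj] at hadj
    obtain ⟨hne, h | h⟩ := hadj
    · intro he
      exact key x y h (Fin.castLE_inj.1 he)
    · intro he
      exact key y x h (Fin.castLE_inj.1 he.symm)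
  refine ⟨C', hprop, Fin.castLE hk ⟨0, by omega⟩, ?_⟩
  have h0 : 0 < n := by omega
  set f : Fin n → Option (Fin n × Bool) := fun v => some (v, decide (v.val % 2 = 1)) with hf
  have hmaps : ∀ v : Fin n, v ∈ Finset.univ → f v ∈
      Finset.univ.filter (fun x => C' x = Fin.castLE hk ⟨0, by omega⟩) := by
    intro v _
    simp only [Finset.mem_filter, Finset.mem_univ, true_and, hC', Fin.castLE_inj, hf, hcE]
    apply Fin.ext
    simp only
    by_cases h : v.val % 2 = 1
    · simp [h]; omega
    · simp [h]; omega
  have hinj : Set.InjOn f ↑(Finset.univ : Finset (Fin n)) := by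
    intro x _ y _ hxy
    simp only [hf, Option.some_inj, Prod.mk.injEq] at hxy
    exact hxy.1
  have := Finset.card_le_card_of_injOn f hmaps hinj
  simpa [theta] using this


/-- colour of `(v, false)` in the odd construction, as a natural number -/
def cfalse (n v : ℕ) : ℕ := if v = n - 1 then 2 else v % 2

/-- colour of `(v, true)` in the odd construction -/
def ctrue (n v : ℕ) : ℕ := if v = n - 1 then 0 else if v = n - 2 then 2 else (v + 1) % 2

lemma cfalse_lt (n v : ℕ) : cfalse n v < 4 := by unfold cfalse; split <;> omega
lemma ctrue_lt (n v : ℕ) : ctrue n v < 4 := by unfold ctrue; split <;> [omega; (split <;> omega)]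

lemma cfalse_cycle {n : ℕ} (hn : 3 ≤ n) (v w : ℕ) (hv : v < n) (hw : w = (v + 1) % n) :
    cfalse n v ≠ cfalse n w := by
  rcases eq_or_lt_of_le (show v + 1 ≤ n by omega) with h | h
  · have : w = 0 := by rw [hw, ← h, Nat.mod_self]
    subst this
    unfold cfalse
    rw [if_pos (by omega), if_neg (by omega)]
    omega
  · have : w = v + 1 := by rw [hw, Nat.mod_eq_of_lt h]
    subst this
    unfold cfalse
    split <;> split <;> omega

lemma ctrue_cycle {n : ℕ} (hn : 3 ≤ n) (v w : ℕ) (hv : v < n) (hw : w = (v + 1) % n) :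
    ctrue n v ≠ ctrue n w := by
  rcases eq_or_lt_of_le (show v + 1 ≤ n by omega) with h | h
  · have : w = 0 := by rw [hw, ← h, Nat.mod_self]
    subst this
    unfold ctrue
    rw [if_pos (by omega), if_neg (by omega), if_neg (by omega)]
    omega
  · have : w = v + 1 := by rw [hw, Nat.mod_eq_of_lt h]
    subst this
    unfold ctrue
    split_ifs <;> omega

lemma cross_ne {n : ℕ} (hn : 3 ≤ n) (v : ℕ) (hv : v < n) : cfalse n v ≠ ctrue n v := by
  unfold cfalse ctrue
  split_ifs <;> omega

lemma odd_coloring {n : ℕ} (hn : 3 ≤ n) {k : ℕ} (hk : 4 ≤ k) :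
    ∃ C' : Option (Fin n × Bool) → Fin k,
      IsProperColoring (djembeG n) C' ∧ ∃ i, n - 1 ≤ theta C' i := by
  classical
  set c4 : Option (Fin n × Bool) → Fin 4 := fun x =>
    match x with
    | none => ⟨3, by omega⟩
    | some (v, false) => ⟨cfalse n v.val, cfalse_lt n v.val⟩
    | some (v, true) => ⟨ctrue n v.val, ctrue_lt n v.val⟩ with hc4
  set C' : Option (Fin n × Bool) → Fin k := fun x => Fin.castLE hk (c4 x) with hC'
  have hlt3 : ∀ (v : Fin n) (b : Bool), (c4 (some (v, b))).val < 3 := by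
    intro v b
    cases b <;> simp only [hc4]
    · unfold cfalse; split <;> omega
    · unfold ctrue; split <;> [omega; (split <;> omega)]
  have key : ∀ x y, (match x, y with
      | some (v, i), some (w, j) => (i = j ∧ w.val = (v.val + 1) % n) ∨ (i ≠ j ∧ w = v)
      | none, some _ => True
      | _, _ => False) → c4 x ≠ c4 y := by
    intro x y h
    rcases x with _ | ⟨v, i⟩ <;> rcases y with _ | ⟨w, j⟩
    · exact absurd h (by simp)
    · intro he
      have := congrArg Fin.val he
      have h3 := hlt3 w j
      simp only [hc4] at this h3
      omega
    · exact absurd h (by simp)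
    · simp only at h
      rcases h with ⟨hij, hw⟩ | ⟨hij, hw⟩
      · subst hij
        intro he
        have h2 := congrArg Fin.val he
        cases i <;> simp only [hc4] at h2
        · exact cfalse_cycle hn v.val w.val v.isLt hw h2
        · exact ctrue_cycle hn v.val w.val v.isLt hw h2
      · subst hw
        intro he
        have h2 := congrArg Fin.val he
        cases i <;> cases j
        · exact hij rfl
        · simp only [hc4] at h2
          exact cross_ne hn w.val w.isLt h2
        · simp only [hc4] at h2
          exact cross_ne hn w.val w.isLt h2.symm
        · exact hij rfl
  have hprop : IsProperColoring (djembeG n) C' := by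
    intro x y hadj
    rw [djembeG, SimpleGraph.fromRel_adj] at hadj
    obtain ⟨hne, h | h⟩ := hadj
    · intro he
      exact key x y h (Fin.castLE_inj.1 he)
    · intro he
      exact key y x h (Fin.castLE_inj.1 he.symm)
  refine ⟨C', hprop, Fin.castLE hk ⟨0, by omega⟩, ?_⟩
  set f : Fin (n - 1) → Option (Fin n × Bool) := fun p =>
    if p.val % 2 = 0 then some (⟨p.val, by omega⟩, false)
    else if p.val < n - 2 then some (⟨p.val, by omega⟩, true)
    else some (⟨n - 1, by omega⟩, true) with hf
  have hmaps : ∀ p : Fin (n - 1), p ∈ Finset.univ → f p ∈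
      Finset.univ.filter (fun x => C' x = Fin.castLE hk ⟨0, by omega⟩) := by
    intro p _
    have hp : p.val < n - 1 := p.isLt
    simp only [Finset.mem_filter, Finset.mem_univ, true_and, hC', Fin.castLE_inj, hf]
    by_cases h1 : p.val % 2 = 0
    · rw [if_pos h1]
      apply Fin.ext
      simp only [hc4]
      unfold cfalse
      rw [if_neg (by omega)]
      omega
    · rw [if_neg h1]
      by_cases h2 : p.val < n - 2
      · rw [if_pos h2]
        apply Fin.ext
        simp only [hc4]
        unfold ctrue
        rw [if_neg (by omega), if_neg (by omega)]
        omega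
      · rw [if_neg h2]
        apply Fin.ext
        simp only [hc4]
        unfold ctrue
        rw [if_pos rfl]
  have hinj : Set.InjOn f ↑(Finset.univ : Finset (Fin (n - 1))) := by
    intro x _ y _ hxy
    have hx : x.val < n - 1 := x.isLt
    have hy : y.val < n - 1 := y.isLt
    simp only [hf] at hxy
    apply Fin.ext
    split_ifs at hxy <;>
      simp only [Option.some_inj, Prod.mk.injEq, Fin.mk.injEq] at hxy <;> omega
  have := Finset.card_le_card_of_injOn f hmaps hinj
  simpa [theta] using this

theorem djembeGraph_chromaticCurlingNumber (n : ℕ) (hn : 3 ≤ n)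
    (C : Option (Fin n × Bool) → Fin (chi (djembeG n)))
    (hC : IsChiMinusColoring (djembeG n) C) :
    Finset.univ.sup (theta C) = if Even n then n else n - 1 := by
  classical
  obtain ⟨hprop, hlex⟩ := hC
  have hK3 : 3 ≤ chi (djembeG n) := chi_ge3 hn C hprop
  obtain ⟨a, t, hat, hle, i0, hi0⟩ := classSizesDesc_head (by omega) C
  have hsup : Finset.univ.sup (theta C) = a := by
    apply le_antisymm
    · exact Finset.sup_le (fun i _ => hle i)
    · rw [← hi0]; exact Finset.le_sup (Finset.mem_univ i0)
  by_cases hev : Even n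
  · rw [if_pos hev, hsup]
    obtain ⟨C', hC'prop, i1, hi1⟩ := even_coloring hn hev hK3
    obtain ⟨b, t', hbt, hle', _⟩ := classSizesDesc_head (by omega) C'
    have hb : n ≤ b := le_trans hi1 (hle' i1)
    have hna : ¬ a < n := by
      intro hlt
      exact hlex C' hC'prop (by rw [hat, hbt]; exact List.Lex.rel (by omega))
    have hub := (theta_ub hn C hprop i0).1
    omega
  · rw [if_neg hev, hsup]
    have hK4 : 4 ≤ chi (djembeG n) := chi_ge4 hn hev C hprop
    obtain ⟨C', hC'prop, i1, hi1⟩ := odd_coloring hn hK4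
    obtain ⟨b, t', hbt, hle', _⟩ := classSizesDesc_head (by omega) C'
    have hb : n - 1 ≤ b := le_trans hi1 (hle' i1)
    have hna : ¬ a < n - 1 := by
      intro hlt
      exact hlex C' hC'prop (by rw [hat, hbt]; exact List.Lex.rel (by omega))
    have hub := (theta_ub hn C hprop i0).2 hev
    omega
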